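/- arXiv:2605.31322 — 2 statements merged into one kernel-verified Lean document; each statement's English description precedes it below -/
import Mathlib

section
/- Let δ > 0 and λ₀ ∈ ℂ with λ₀ + δ⁻¹ ≠ 0. For vectors u, v in a complex vector space, the system (−δ⁻¹u + v = λ₀u and −δ⁻²u + δ·L v + δ⁻¹v = λ₀v), where L is a linear operator, is equivalent to (u = (λ₀ + δ⁻¹)⁻¹ v and L v = μ₀ v) with μ₀ := λ₀²/(δλ₀ + 1). In particular the kernel of λ₀ − G is isomorphic (as a complex vector space) to the kernel of μ₀ − L, where G is the block operator [[−δ⁻¹, 1], [−δ⁻², δL + δ⁻¹]]. -/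
/-- The eigenvalue system for the block operator `G = [[-δ⁻¹, 1], [-δ⁻², δL + δ⁻¹]]`
at `λ₀` (with `δλ₀ + 1 ≠ 0`) is equivalent to `u = (λ₀ + δ⁻¹)⁻¹ v` and
`L v = μ₀ v` with `μ₀ = λ₀²/(δλ₀ + 1)`; in particular
`ker(λ₀ - G) ≅ ker(μ₀ - L)` as complex vector spaces. -/
theorem kernel_G_iso_kernel_L {V : Type*} [AddCommGroup V] [Module ℂ V]
    (L : V →ₗ[ℂ] V) (δ : ℝ) (hδ : 0 < δ) (lam0 : ℂ) (h : (δ:ℂ) * lam0 + 1 ≠ 0)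
    (μ₀ : ℂ) (hμ₀ : μ₀ = lam0^2 / ((δ:ℂ) * lam0 + 1))
    (G : (V × V) →ₗ[ℂ] (V × V))
    (hG : ∀ u v : V, G (u, v) =
      (-(δ:ℂ)⁻¹ • u + v, -((δ:ℂ)^2)⁻¹ • u + (δ:ℂ) • L v + (δ:ℂ)⁻¹ • v)) :
    (∀ u v : V,
      ((-(δ:ℂ)⁻¹ • u + v = lam0 • u ∧
        -((δ:ℂ)^2)⁻¹ • u + (δ:ℂ) • L v + (δ:ℂ)⁻¹ • v = lam0 • v)
      ↔ (u = (lam0 + (δ:ℂ)⁻¹)⁻¹ • v ∧ L v = μ₀ • v))) ∧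
    Nonempty
      ((LinearMap.ker (lam0 • (LinearMap.id : (V × V) →ₗ[ℂ] (V × V)) - G)) ≃ₗ[ℂ]
        (LinearMap.ker (μ₀ • (LinearMap.id : V →ₗ[ℂ] V) - L))) := by
  have hδ' : (δ:ℂ) ≠ 0 := Complex.ofReal_ne_zero.mpr hδ.ne'
  have hc2 : lam0 + (δ:ℂ)⁻¹ = ((δ:ℂ) * lam0 + 1) / (δ:ℂ) := by
    field_simp
  have hc : lam0 + (δ:ℂ)⁻¹ ≠ 0 := hc2 ▸ div_ne_zero h hδ'
  have hcinv : (lam0 + (δ:ℂ)⁻¹)⁻¹ = (δ:ℂ) / ((δ:ℂ) * lam0 + 1) := by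
    rw [hc2, inv_div]
  have hmain : ∀ u v : V,
      ((-(δ:ℂ)⁻¹ • u + v = lam0 • u ∧
        -((δ:ℂ)^2)⁻¹ • u + (δ:ℂ) • L v + (δ:ℂ)⁻¹ • v = lam0 • v)
      ↔ (u = (lam0 + (δ:ℂ)⁻¹)⁻¹ • v ∧ L v = μ₀ • v)) := by
    intro u v
    constructor
    · rintro ⟨h1, h2⟩
      have hv : v = (lam0 + (δ:ℂ)⁻¹) • u := by
        linear_combination (norm := module) h1
      have hu : u = (lam0 + (δ:ℂ)⁻¹)⁻¹ • v := by
        rw [hv, smul_smul, inv_mul_cancel₀ hc, one_smul]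
      refine ⟨hu, ?_⟩
      rw [hu] at h2
      have hδL : (δ:ℂ) • L v =
          (lam0 - (δ:ℂ)⁻¹ + ((δ:ℂ)^2)⁻¹ * (lam0 + (δ:ℂ)⁻¹)⁻¹) • v := by
        linear_combination (norm := module) h2
      have h3 : L v = (δ:ℂ)⁻¹ • ((δ:ℂ) • L v) := by
        rw [smul_smul, inv_mul_cancel₀ hδ', one_smul]
      rw [h3, hδL, smul_smul, hμ₀]
      congr 1
      rw [hcinv]
      field_simp [hδ', h]
      ring
    · rintro ⟨hu, hL⟩
      subst hu
      constructor
      · match_scalars <;> (rw [hcinv]; field_simp [hδ', h]; try ring)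
      · rw [hL, hμ₀]
        match_scalars <;> (rw [hcinv]; field_simp [hδ', h]; try ring)
  refine ⟨hmain, ?_⟩
  have memG : ∀ u v : V,
      ((u, v) ∈ LinearMap.ker (lam0 • (LinearMap.id : (V × V) →ₗ[ℂ] (V × V)) - G)) ↔
      (-(δ:ℂ)⁻¹ • u + v = lam0 • u ∧
        -((δ:ℂ)^2)⁻¹ • u + (δ:ℂ) • L v + (δ:ℂ)⁻¹ • v = lam0 • v) := by
    intro u v
    rw [LinearMap.mem_ker, LinearMap.sub_apply, LinearMap.smul_apply, LinearMap.id_apply,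
      sub_eq_zero, hG u v, Prod.smul_mk, Prod.ext_iff]
    constructor
    · rintro ⟨a, b⟩; exact ⟨a.symm, b.symm⟩
    · rintro ⟨a, b⟩; exact ⟨a.symm, b.symm⟩
  have memL : ∀ v : V,
      (v ∈ LinearMap.ker (μ₀ • (LinearMap.id : V →ₗ[ℂ] V) - L)) ↔ L v = μ₀ • v := by
    intro v
    rw [LinearMap.mem_ker, LinearMap.sub_apply, LinearMap.smul_apply, LinearMap.id_apply,
      sub_eq_zero]
    exact eq_comm
  exact ⟨{
    toFun := fun p => ⟨p.1.2, (memL _).mpr ((hmain p.1.1 p.1.2).mp ((memG _ _).mp p.2)).2⟩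
    map_add' := fun p q => rfl
    map_smul' := fun a p => rfl
    invFun := fun q => ⟨((lam0 + (δ:ℂ)⁻¹)⁻¹ • q.1, q.1), (memG _ _).mpr
      ((hmain ((lam0 + (δ:ℂ)⁻¹)⁻¹ • q.1) q.1).mpr ⟨rfl, (memL _).mp q.2⟩)⟩
    left_inv := fun p => by
      have := ((hmain p.1.1 p.1.2).mp ((memG _ _).mp p.2)).1
      exact Subtype.ext (Prod.ext this.symm rfl)
    right_inv := fun q => rfl }⟩
end

section
/- Let δ > 0 and m > 0. Define ω₂ := sup over real μ ≥ m of max{Re λ : λ² + δμ²λ + μ² = 0}. Then ω₂ ≤ −min{1/δ, δm²/2} < 0. In particular, the set of all roots of these quadratics as μ ranges over [m, ∞) is contained in the closed half-plane {λ ∈ ℂ : Re λ ≤ −min{1/δ, δm²/2}}. -/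
/-!
A root `λ` of `λ² + bλ + c = 0` with real `b > 0` is either real, and then `bλ + c = -λ² ≤ 0`
gives `λ ≤ -c/b`, or non-real, and then its conjugate is the other root, so `Re λ = -b/2`.
With `b = δμ²` and `c = μ²` this is `Re λ ≤ -min (1/δ) (δμ²/2) ≤ -min (1/δ) (δm²/2)`.
-/

lemma Complex.exists_quadratic_eq_zero (b c : ℂ) : ∃ z : ℂ, z ^ 2 + b * z + c = 0 := by
  obtain ⟨z, hz⟩ :=
    _root_.exists_quadratic_eq_zero one_ne_zero (IsAlgClosed.exists_eq_mul_self (discrim 1 b c))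
  exact ⟨z, by linear_combination hz⟩

lemma le_neg_div_of_quadratic_eq_zero {b c r : ℝ} (hb : 0 < b) (h : r ^ 2 + b * r + c = 0) :
    r ≤ -c / b := by
  rw [le_div_iff₀ hb]
  nlinarith [sq_nonneg r]

lemma Complex.re_quadratic_eq_zero_or_re_eq {b c : ℝ} {z : ℂ}
    (h : z ^ 2 + b * z + c = 0) : z.re ^ 2 + b * z.re + c = 0 ∨ z.re = -b / 2 := by
  have hre : z.re ^ 2 - z.im ^ 2 + b * z.re + c = 0 := by
    simpa [pow_two] using congrArg Complex.re h
  have him : z.im * (2 * z.re + b) = 0 := by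
    have := congrArg Complex.im h
    simp only [pow_two, add_im, mul_im, ofReal_re, ofReal_im, zero_im] at this
    linear_combination this
  rcases mul_eq_zero.mp him with hreal | hcomplex
  · left; simpa [hreal] using hre
  · right; linarith

lemma Complex.re_le_neg_min_of_quadratic_eq_zero {b c : ℝ} (hb : 0 < b) {z : ℂ}
    (h : z ^ 2 + b * z + c = 0) : z.re ≤ -min (c / b) (b / 2) := by
  rcases re_quadratic_eq_zero_or_re_eq h with hreal | hcomplex
  · have := le_neg_div_of_quadratic_eq_zero hb hreal
    have := min_le_left (c / b) (b / 2)
    rw [neg_div] at *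
    linarith
  · have := min_le_right (c / b) (b / 2)
    rw [hcomplex, neg_div]
    linarith

lemma re_le_neg_min_of_root (δ m μ : ℝ) (hδ : 0 < δ) (hm : 0 < m) (hμ : m ≤ μ)
    (lam : ℂ) (h : lam ^ 2 + (δ : ℂ) * (μ : ℂ) ^ 2 * lam + (μ : ℂ) ^ 2 = 0) :
    lam.re ≤ -min (1 / δ) (δ * m ^ 2 / 2) := by
  have hμ0 : μ ≠ 0 := (hm.trans_le hμ).ne'
  have hb : 0 < δ * μ ^ 2 := by positivity
  have h' : lam ^ 2 + ((δ * μ ^ 2 : ℝ) : ℂ) * lam + ((μ ^ 2 : ℝ) : ℂ) = 0 := by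
    push_cast; exact h
  have hc : μ ^ 2 / (δ * μ ^ 2) = 1 / δ := by field_simp
  have hmono : δ * m ^ 2 / 2 ≤ δ * μ ^ 2 / 2 := by gcongr
  calc lam.re ≤ -min (1 / δ) (δ * μ ^ 2 / 2) := by
        simpa [hc] using Complex.re_le_neg_min_of_quadratic_eq_zero hb h'
    _ ≤ -min (1 / δ) (δ * m ^ 2 / 2) := neg_le_neg (min_le_min_left _ hmono)

/-- For `δ, m > 0`, the supremum `ω₂` of the real parts of the roots of
`λ² + δμ²λ + μ² = 0` over real `μ ≥ m` satisfies `ω₂ ≤ -min{1/δ, δm²/2} < 0`;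
in particular all such roots lie in `{λ : Re λ ≤ -min{1/δ, δm²/2}}`. -/
theorem roots_halfplane_bound (δ m : ℝ) (hδ : 0 < δ) (hm : 0 < m) :
    (-min (1/δ) (δ * m^2 / 2) < 0) ∧
    sSup {x : ℝ | ∃ μ : ℝ, m ≤ μ ∧ ∃ lam : ℂ,
        lam^2 + (δ:ℂ) * (μ:ℂ)^2 * lam + (μ:ℂ)^2 = 0 ∧ x = lam.re}
      ≤ -min (1/δ) (δ * m^2 / 2) ∧
    ∀ (μ : ℝ), m ≤ μ → ∀ lam : ℂ,
      lam^2 + (δ:ℂ) * (μ:ℂ)^2 * lam + (μ:ℂ)^2 = 0 →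
      lam.re ≤ -min (1/δ) (δ * m^2 / 2) := by
  refine ⟨?_, ?_, fun μ hμ lam h => re_le_neg_min_of_root δ m μ hδ hm hμ lam h⟩
  · simpa using lt_min (one_div_pos.mpr hδ) (by positivity : 0 < δ * m ^ 2 / 2)
  · obtain ⟨lam, hlam⟩ := Complex.exists_quadratic_eq_zero ((δ : ℂ) * (m : ℂ) ^ 2) ((m : ℂ) ^ 2)
    refine csSup_le ⟨lam.re, m, le_rfl, lam, hlam, rfl⟩ ?_
    rintro x ⟨μ, hμ, lam, h, rfl⟩
    exact re_le_neg_min_of_root δ m μ hδ hm hμ lam h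
end
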